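/- arXiv:1409.8122 — 4 statements merged into one kernel-verified Lean document; each statement's English description precedes it below -/
import Mathlib

section
/- For 1 < p ≤ 2 and s ∈ [0,1], define V_s(ξ) := (s + |ξ|)^{(p−2)/2} ξ. Then there is a constant c depending only on n and p such that for all ξ₁, ξ₂ ∈ ℝⁿ: |ξ₁ − ξ₂| ≤ c |V_s(ξ₁) − V_s(ξ₂)|^{2/p} + c (s + |ξ₁|)^{(2−p)/2} |V_s(ξ₁) − V_s(ξ₂)|. -/
open Real
open scoped InnerProductSpace

/-- Bernoulli-type inequality via weighted AM-GM. -/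
private lemma bern {x γ : ℝ} (hx : 0 ≤ x) (hγ0 : 0 ≤ γ) (hγ1 : γ ≤ 1) :
    x ^ γ ≤ γ * x + (1 - γ) := by
  have h := Real.geom_mean_le_arith_mean2_weighted hγ0 (by linarith : (0:ℝ) ≤ 1 - γ)
    hx zero_le_one (by ring)
  simpa using h

/-- Scalar monotonicity for the map `r ↦ (s+r)^α r`. -/
private lemma scalarMono {s r₁ r₂ α : ℝ} (hs : 0 ≤ s) (h1 : 0 ≤ r₁) (hr : r₁ ≤ r₂)
    (hα1 : -1 < α) (hα2 : α ≤ 0) :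
    (1 + α) * (s + r₂) ^ α * (r₂ - r₁) ≤ (s + r₂) ^ α * r₂ - (s + r₁) ^ α * r₁ := by
  set A := s + r₁ with hAdef
  set B := s + r₂ with hBdef
  have hA0 : 0 ≤ A := by positivity
  have hAB : A ≤ B := by simp only [hAdef, hBdef]; linarith
  have hr1A : r₁ ≤ A := by simp only [hAdef]; linarith
  rcases eq_or_lt_of_le hA0 with hA | hA
  · -- A = 0, hence s = 0, r₁ = 0
    have hs0 : s = 0 := by nlinarith [hAdef]
    have hr10 : r₁ = 0 := by nlinarith [hAdef]
    have hB0 : 0 ≤ B ^ α := Real.rpow_nonneg (by linarith [le_trans h1 hr]) α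
    have hr2 : 0 ≤ r₂ := le_trans h1 hr
    rw [hr10]
    nlinarith [mul_nonneg hB0 hr2]
  · have hB : 0 < B := lt_of_lt_of_le hA hAB
    have hvu : B ^ α ≤ A ^ α := Real.rpow_le_rpow_of_nonpos hA hAB hα2
    have hγ0 : 0 ≤ 1 + α := by linarith
    have hγ1 : 1 + α ≤ 1 := by linarith
    -- Bernoulli on x = A/B
    have hx : 0 ≤ A / B := by positivity
    have hb := bern hx hγ0 hγ1
    have hBγ : (0:ℝ) < B ^ (1 + α) := Real.rpow_pos_of_pos hB _
    have hdiv : (A / B) ^ (1 + α) = A ^ (1 + α) / B ^ (1 + α) :=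
      Real.div_rpow hA0 hB.le _
    -- key: A^(1+α) ≤ (1+α)*A*B^α + (-α)*B^(1+α)
    have hkey : A ^ (1 + α) ≤ (1 + α) * (A * B ^ α) + (-α) * B ^ (1 + α) := by
      have h2 : A ^ (1 + α) ≤ ((1 + α) * (A / B) + (1 - (1 + α))) * B ^ (1 + α) := by
        rw [hdiv] at hb
        calc A ^ (1 + α) = A ^ (1 + α) / B ^ (1 + α) * B ^ (1 + α) := by
              field_simp
          _ ≤ ((1 + α) * (A / B) + (1 - (1 + α))) * B ^ (1 + α) :=
              mul_le_mul_of_nonneg_right hb hBγ.le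
      have hBsplit : B ^ (1 + α) = B ^ α * B := by
        rw [add_comm]; exact Real.rpow_add_one hB.ne' α
      have hAB' : A / B * B = A := div_mul_cancel₀ A hB.ne'
      calc A ^ (1 + α) ≤ ((1 + α) * (A / B) + (1 - (1 + α))) * B ^ (1 + α) := h2
        _ = (1 + α) * (A * B ^ α) + (-α) * B ^ (1 + α) := by
            rw [hBsplit]; field_simp; ring
    have hAsplit : A ^ (1 + α) = A ^ α * A := by
      rw [add_comm]; exact Real.rpow_add_one hA.ne' α
    -- r₁ * (A^α - B^α) ≤ A * (A^α - B^α) ≤ (-α) * B^α * (B - A)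
    have step1 : r₁ * (A ^ α - B ^ α) ≤ A * (A ^ α - B ^ α) :=
      mul_le_mul_of_nonneg_right hr1A (by linarith)
    have step2 : A * (A ^ α - B ^ α) ≤ (-α) * B ^ α * (B - A) := by
      have hBsplit : B ^ (1 + α) = B ^ α * B := by
        rw [add_comm]; exact Real.rpow_add_one hB.ne' α
      nlinarith [hkey, hAsplit]
    have hBA : B - A = r₂ - r₁ := by simp only [hAdef, hBdef]; ring
    have step2' : A * (A ^ α - B ^ α) ≤ (-α) * B ^ α * (r₂ - r₁) := by
      rw [← hBA]; exact step2
    nlinarith [step1, step2']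

/-- Purely algebraic quadratic form bound. -/
private lemma quadLem {u v c r₁ r₂ ip : ℝ} (hv : 0 ≤ v) (hvu : v ≤ u) (hc : 0 ≤ c)
    (hc1 : c ≤ 1) (hr : r₁ ≤ r₂) (hip : ip ≤ r₁ * r₂)
    (h2 : c * v * (r₂ - r₁) ≤ v * r₂ - u * r₁) :
    c * v * (r₁ ^ 2 + r₂ ^ 2 - 2 * ip) ≤ u * r₁ ^ 2 + v * r₂ ^ 2 - (u + v) * ip := by
  have key1 : (r₂ - r₁) * (c * v * (r₂ - r₁)) ≤ (r₂ - r₁) * (v * r₂ - u * r₁) :=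
    mul_le_mul_of_nonneg_left h2 (by linarith)
  have key2 : (0:ℝ) ≤ (u + v - 2 * c * v) * (r₁ * r₂ - ip) := by
    apply mul_nonneg _ (by linarith)
    nlinarith
  nlinarith [key1, key2]

/-- Inner product lower bound, assuming `‖ξ₁‖ ≤ ‖ξ₂‖`. -/
private lemma innerAux {α s : ℝ} (hα1 : -1 < α) (hα2 : α ≤ 0) (hs : 0 ≤ s) {n : ℕ}
    (ξ₁ ξ₂ : EuclideanSpace ℝ (Fin n)) (h : ‖ξ₁‖ ≤ ‖ξ₂‖) :
    (1 + α) * (s + ‖ξ₂‖) ^ α * ‖ξ₁ - ξ₂‖ ^ 2 ≤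
      ⟪(s + ‖ξ₁‖) ^ α • ξ₁ - (s + ‖ξ₂‖) ^ α • ξ₂, ξ₁ - ξ₂⟫_ℝ := by
  set u := (s + ‖ξ₁‖) ^ α with hu
  set v := (s + ‖ξ₂‖) ^ α with hv
  have expand : ⟪u • ξ₁ - v • ξ₂, ξ₁ - ξ₂⟫_ℝ =
      u * ‖ξ₁‖ ^ 2 + v * ‖ξ₂‖ ^ 2 - (u + v) * ⟪ξ₁, ξ₂⟫_ℝ := by
    simp only [inner_sub_left, inner_sub_right, real_inner_smul_left,
      real_inner_self_eq_norm_sq, real_inner_comm ξ₂ ξ₁]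
    ring
  have hnorm : ‖ξ₁ - ξ₂‖ ^ 2 = ‖ξ₁‖ ^ 2 + ‖ξ₂‖ ^ 2 - 2 * ⟪ξ₁, ξ₂⟫_ℝ := by
    rw [norm_sub_sq_real]; ring
  rw [expand, hnorm]
  by_cases hA : s + ‖ξ₁‖ = 0
  · have hs0 : s = 0 := by nlinarith [norm_nonneg ξ₁]
    have hξ₁ : ‖ξ₁‖ = 0 := by nlinarith [norm_nonneg ξ₁]
    have hξ10 : ξ₁ = 0 := norm_eq_zero.mp hξ₁
    have hv0 : 0 ≤ v := Real.rpow_nonneg (by positivity) α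
    have hip : ⟪ξ₁, ξ₂⟫_ℝ = 0 := by rw [hξ10]; simp
    rw [hip, hξ₁]
    nlinarith [mul_nonneg hv0 (sq_nonneg ‖ξ₂‖)]
  · have hApos : 0 < s + ‖ξ₁‖ := lt_of_le_of_ne (by positivity) (Ne.symm hA)
    have hBpos : 0 < s + ‖ξ₂‖ := by linarith
    have hv0 : 0 ≤ v := Real.rpow_nonneg hBpos.le α
    have hvu : v ≤ u := Real.rpow_le_rpow_of_nonpos hApos (by linarith) hα2
    exact quadLem hv0 hvu (by linarith) (by linarith) h (real_inner_le_norm ξ₁ ξ₂)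
      (scalarMono hs (norm_nonneg ξ₁) h hα1 hα2)

/-- Inner product lower bound, general version with `max`. -/
private lemma innerBound {α s : ℝ} (hα1 : -1 < α) (hα2 : α ≤ 0) (hs : 0 ≤ s) {n : ℕ}
    (ξ₁ ξ₂ : EuclideanSpace ℝ (Fin n)) :
    (1 + α) * (s + max ‖ξ₁‖ ‖ξ₂‖) ^ α * ‖ξ₁ - ξ₂‖ ^ 2 ≤
      ⟪(s + ‖ξ₁‖) ^ α • ξ₁ - (s + ‖ξ₂‖) ^ α • ξ₂, ξ₁ - ξ₂⟫_ℝ := by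
  rcases le_total ‖ξ₁‖ ‖ξ₂‖ with h | h
  · rw [max_eq_right h]; exact innerAux hα1 hα2 hs ξ₁ ξ₂ h
  · have := innerAux hα1 hα2 hs ξ₂ ξ₁ h
    rw [max_eq_left h]
    have e1 : ⟪(s + ‖ξ₂‖) ^ α • ξ₂ - (s + ‖ξ₁‖) ^ α • ξ₁, ξ₂ - ξ₁⟫_ℝ =
        ⟪(s + ‖ξ₁‖) ^ α • ξ₁ - (s + ‖ξ₂‖) ^ α • ξ₂, ξ₁ - ξ₂⟫_ℝ := by
      rw [show (s + ‖ξ₂‖) ^ α • ξ₂ - (s + ‖ξ₁‖) ^ α • ξ₁ =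
        -((s + ‖ξ₁‖) ^ α • ξ₁ - (s + ‖ξ₂‖) ^ α • ξ₂) by abel,
        show ξ₂ - ξ₁ = -(ξ₁ - ξ₂) by abel, inner_neg_neg]
    rw [e1, norm_sub_rev ξ₂ ξ₁] at this
    exact this

/-- For `1 < p ≤ 2`, `s ∈ [0,1]` and `V_s(ξ) = (s+|ξ|)^((p-2)/2) ξ`:
`|ξ₁-ξ₂| ≤ c|V_s(ξ₁)-V_s(ξ₂)|^(2/p) + c(s+|ξ₁|)^((2-p)/2)|V_s(ξ₁)-V_s(ξ₂)|`
with `c = c(n,p)`. -/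
theorem V_singular_bound (n : ℕ) (p : ℝ) (hp1 : 1 < p) (hp2 : p ≤ 2) :
    ∃ c : ℝ, 0 < c ∧
      ∀ s ∈ Set.Icc (0:ℝ) 1, ∀ ξ₁ ξ₂ : EuclideanSpace ℝ (Fin n),
        ‖ξ₁ - ξ₂‖ ≤
          c * ‖(s + ‖ξ₁‖) ^ ((p - 2)/2) • ξ₁ - (s + ‖ξ₂‖) ^ ((p - 2)/2) • ξ₂‖ ^ (2/p) +
          c * (s + ‖ξ₁‖) ^ ((2 - p)/2) *
            ‖(s + ‖ξ₁‖) ^ ((p - 2)/2) • ξ₁ - (s + ‖ξ₂‖) ^ ((p - 2)/2) • ξ₂‖ := by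
  set α := (p - 2)/2 with hαdef
  set β := (2 - p)/2 with hβdef
  have hβα : β = -α := by rw [hαdef, hβdef]; ring
  have hα1 : -1 < α := by rw [hαdef]; linarith
  have hα2 : α ≤ 0 := by rw [hαdef]; linarith
  have hβ0 : 0 ≤ β := by rw [hβdef]; linarith
  have hβ1 : β ≤ 1 := by rw [hβdef]; linarith
  have hc₀ : 0 < 1 + α := by linarith
  have hc₀1 : 1 + α ≤ 1 := by linarith
  have hp0 : 0 < p := by linarith
  refine ⟨96, by norm_num, ?_⟩
  rintro s ⟨hs0, hs1⟩ ξ₁ ξ₂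
  set r₁ := ‖ξ₁‖ with hr₁
  set r₂ := ‖ξ₂‖ with hr₂
  have hr₁0 : 0 ≤ r₁ := norm_nonneg _
  have hr₂0 : 0 ≤ r₂ := norm_nonneg _
  set V := (s + r₁) ^ α • ξ₁ - (s + r₂) ^ α • ξ₂ with hV
  set δ := ‖V‖ with hδ
  have hδ0 : 0 ≤ δ := norm_nonneg _
  set t := ‖ξ₁ - ξ₂‖ with ht
  have ht0 : 0 ≤ t := norm_nonneg _
  have hδp0 : 0 ≤ δ ^ (2/p) := Real.rpow_nonneg hδ0 _
  have haβ0 : 0 ≤ (s + r₁) ^ β := Real.rpow_nonneg (by positivity) _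
  -- main inner product bound
  have hinner : (1 + α) * (s + max r₁ r₂) ^ α * t ^ 2 ≤ δ * t := by
    calc (1 + α) * (s + max r₁ r₂) ^ α * t ^ 2 ≤ ⟪V, ξ₁ - ξ₂⟫_ℝ :=
          innerBound hα1 hα2 hs0 ξ₁ ξ₂
      _ ≤ δ * t := real_inner_le_norm V (ξ₁ - ξ₂)
  by_cases htz : t = 0
  · rw [htz]; positivity
  · have htpos : 0 < t := lt_of_le_of_ne ht0 (Ne.symm htz)
    have hkey : (1 + α) * (s + max r₁ r₂) ^ α * t ≤ δ := by
      have h := hinner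
      nlinarith [h, htpos]
    by_cases hcase : r₂ ≤ 2 * (s + r₁)
    · -- Case 1: second term dominates
      have hapos : 0 < s + r₁ := by
        by_contra hcon
        push_neg at hcon
        have hsum : t ≤ r₁ + r₂ := by
          have h := norm_sub_le ξ₁ ξ₂
          rw [← hr₁, ← hr₂, ← ht] at h
          exact h
        linarith [htpos, hcase, hcon, hs0, hr₁0, hr₂0, hsum]
      have hMle : s + max r₁ r₂ ≤ 3 * (s + r₁) := by
        rcases max_cases r₁ r₂ with ⟨he, _⟩ | ⟨he, _⟩ <;> rw [he] <;> linarith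
      have hMpos : 0 < s + max r₁ r₂ := by
        have : r₁ ≤ max r₁ r₂ := le_max_left _ _
        linarith
      have hmono : (3 * (s + r₁)) ^ α ≤ (s + max r₁ r₂) ^ α :=
        Real.rpow_le_rpow_of_nonpos hMpos hMle hα2
      have h3a : 0 < 3 * (s + r₁) := by linarith
      have hkey2 : (1 + α) * (3 * (s + r₁)) ^ α * t ≤ δ := by
        have := mul_le_mul_of_nonneg_right
          (mul_le_mul_of_nonneg_left hmono hc₀.le) ht0
        linarith
      -- invert: t ≤ (3(s+r₁))^β * δ / (1+α)
      have hprod : (3 * (s + r₁)) ^ α * (3 * (s + r₁)) ^ β = 1 := by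
        rw [hβα, Real.rpow_neg h3a.le]
        exact mul_inv_cancel₀ (ne_of_gt (Real.rpow_pos_of_pos h3a _))
      have h3β : (0:ℝ) < (3 * (s + r₁)) ^ β := Real.rpow_pos_of_pos h3a _
      have hstep : (1 + α) * t ≤ (3 * (s + r₁)) ^ β * δ := by
        have h := mul_le_mul_of_nonneg_left hkey2 h3β.le
        have e : (3 * (s + r₁)) ^ β * ((1 + α) * (3 * (s + r₁)) ^ α * t) = (1 + α) * t := by
          rw [show (3 * (s + r₁)) ^ β * ((1 + α) * (3 * (s + r₁)) ^ α * t) =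
            (3 * (s + r₁)) ^ α * (3 * (s + r₁)) ^ β * ((1 + α) * t) by ring, hprod, one_mul]
        linarith [h, e]
      have hsplit : (3 * (s + r₁)) ^ β = 3 ^ β * (s + r₁) ^ β :=
        Real.mul_rpow (by norm_num) hapos.le
      have h3βle : (3:ℝ) ^ β ≤ 3 := by
        calc (3:ℝ) ^ β ≤ 3 ^ (1:ℝ) :=
              Real.rpow_le_rpow_of_exponent_le (by norm_num) hβ1
          _ = 3 := Real.rpow_one 3
      have hfin : t ≤ 6 * (s + r₁) ^ β * δ := by
        have h1 : (3 * (s + r₁)) ^ β * δ ≤ 3 * (s + r₁) ^ β * δ := by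
          rw [hsplit]
          apply mul_le_mul_of_nonneg_right _ hδ0
          exact mul_le_mul_of_nonneg_right h3βle haβ0
        have h2 : (1 + α) * t ≤ 3 * (s + r₁) ^ β * δ := le_trans hstep h1
        -- 1 + α = p/2 ≥ 1/2
        have hc₀half : (1:ℝ)/2 ≤ 1 + α := by rw [hαdef]; linarith
        have h3 : 1/2 * t ≤ (1 + α) * t := mul_le_mul_of_nonneg_right hc₀half ht0
        linarith [h2, h3]
      calc t ≤ 6 * (s + r₁) ^ β * δ := hfin
        _ ≤ 96 * δ ^ (2/p) + 96 * (s + r₁) ^ β * δ := by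
            have := mul_nonneg haβ0 hδ0
            linarith [hδp0]
    · -- Case 2: first term dominates
      push_neg at hcase
      have hr₂pos : 0 < r₂ := by linarith
      have hM : max r₁ r₂ = r₂ := max_eq_right (by linarith)
      rw [hM] at hkey
      have htlow : r₂ / 2 ≤ t := by
        have h1 : r₂ - r₁ ≤ t := by
          have := norm_sub_norm_le ξ₂ ξ₁
          rw [norm_sub_rev] at this
          simpa [← hr₁, ← hr₂, ← ht] using this
        linarith
      have hBle : s + r₂ ≤ 2 * r₂ := by linarith
      have hBpos : 0 < s + r₂ := by linarith
      have hmono : (2 * r₂) ^ α ≤ (s + r₂) ^ α :=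
        Real.rpow_le_rpow_of_nonpos hBpos hBle hα2
      have h2r : (0:ℝ) < 2 * r₂ := by linarith
      have h2α : (2:ℝ) ^ α ≥ 1/2 := by
        calc (2:ℝ) ^ α ≥ 2 ^ (-1:ℝ) :=
              Real.rpow_le_rpow_of_exponent_le (by norm_num) (by linarith)
          _ = 1/2 := by
              rw [Real.rpow_neg_one]; norm_num
      have hsplit2 : (2 * r₂) ^ α = 2 ^ α * r₂ ^ α :=
        Real.mul_rpow (by norm_num) hr₂0
      have hr₂α : (0:ℝ) < r₂ ^ α := Real.rpow_pos_of_pos hr₂pos _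
      -- δ ≥ (1+α)/4 * r₂^(1+α)
      have hδlow : (1 + α)/4 * r₂ ^ (1 + α) ≤ δ := by
        have h1 : (1 + α) * (2 * r₂) ^ α * (r₂/2) ≤ (1 + α) * (s + r₂) ^ α * t := by
          apply mul_le_mul
          · exact mul_le_mul_of_nonneg_left hmono hc₀.le
          · exact htlow
          · positivity
          · positivity
        have h2 : (1 + α)/4 * r₂ ^ (1 + α) ≤ (1 + α) * (2 * r₂) ^ α * (r₂/2) := by
          have e1 : r₂ ^ (1 + α) = r₂ ^ α * r₂ := by
            rw [add_comm]; exact Real.rpow_add_one hr₂pos.ne' α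
          have e2 : (1/2) * r₂ ^ α ≤ (2 * r₂) ^ α := by
            rw [hsplit2]; exact mul_le_mul_of_nonneg_right h2α hr₂α.le
          have e3 : (1 + α) * ((1/2) * r₂ ^ α) * (r₂/2) ≤ (1 + α) * (2 * r₂) ^ α * (r₂/2) :=
            mul_le_mul_of_nonneg_right (mul_le_mul_of_nonneg_left e2 hc₀.le) (by positivity)
          rw [e1]
          linarith [e3]
        linarith [hkey]
      -- so r₂^(p/2) ≤ (4/(1+α)) δ, note 1+α = p/2
      have hpα : 1 + α = p/2 := by rw [hαdef]; ring
      have hr₂bound : r₂ ^ (p/2) ≤ 8/p * δ := by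
        rw [← hpα]
        have h4 : r₂ ^ (1 + α) ≤ 4/(1+α) * δ := by
          rw [div_mul_eq_mul_div, le_div_iff₀ hc₀]
          linarith [hδlow]
        calc r₂ ^ (1 + α) ≤ 4/(1+α) * δ := h4
          _ = 8/p * δ := by rw [hpα]; ring
      have hr₂' : r₂ ≤ (8/p * δ) ^ (2/p) := by
        have h1 : (r₂ ^ (p/2)) ^ (2/p) ≤ (8/p * δ) ^ (2/p) :=
          Real.rpow_le_rpow (Real.rpow_nonneg hr₂0 _) hr₂bound (by positivity)
        have h2 : (r₂ ^ (p/2)) ^ (2/p) = r₂ := by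
          rw [← Real.rpow_mul hr₂0, show p/2 * (2/p) = 1 by field_simp, Real.rpow_one]
        linarith [h1, h2.symm.le, h2.le]
      have hr₂'' : r₂ ≤ 64 * δ ^ (2/p) := by
        have h8p : (0:ℝ) ≤ 8/p := by positivity
        have hsp : (8/p * δ) ^ (2/p) = (8/p) ^ (2/p) * δ ^ (2/p) :=
          Real.mul_rpow h8p hδ0
        have h8p1 : (1:ℝ) ≤ 8/p := by
          rw [le_div_iff₀ hp0]; linarith
        have hexp : (8/p) ^ (2/p) ≤ (8/p) ^ (2:ℝ) :=
          Real.rpow_le_rpow_of_exponent_le h8p1 (by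
            rw [div_le_iff₀ hp0]; linarith)
        have hsq : (8/p) ^ (2:ℝ) ≤ 64 := by
          rw [show (2:ℝ) = ((2:ℕ):ℝ) by norm_num, Real.rpow_natCast]
          have h88 : 8/p ≤ 8 := by
            rw [div_le_iff₀ hp0]; linarith
          calc (8/p) ^ (2:ℕ) ≤ 8 ^ (2:ℕ) := pow_le_pow_left₀ h8p h88 2
            _ = 64 := by norm_num
        calc r₂ ≤ (8/p * δ) ^ (2/p) := hr₂'
          _ = (8/p) ^ (2/p) * δ ^ (2/p) := hsp
          _ ≤ 64 * δ ^ (2/p) :=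
              mul_le_mul_of_nonneg_right (hexp.trans hsq) hδp0
      have htup : t ≤ 3/2 * r₂ := by
        have h1 : t ≤ r₁ + r₂ := norm_sub_le ξ₁ ξ₂
        linarith [h1]
      calc t ≤ 3/2 * r₂ := htup
        _ ≤ 96 * δ ^ (2/p) := by linarith [hr₂'']
        _ ≤ 96 * δ ^ (2/p) + 96 * (s + r₁) ^ β * δ := by
            linarith [mul_nonneg haβ0 hδ0]
end

section
/- Let f : Ω × ℝ × ℝⁿ → ℝ be such that ξ ↦ f(x,u,ξ) is C², and suppose that for all (x,u,ξ,λ) the second-derivative bounds ν(s+|ξ|)^{p−2}|λ|² ≤ ⟨∂²f(x,u,ξ)λ, λ⟩ ≤ L(s+|ξ|)^{p−2}|λ|² hold, where p > 1, s ∈ [0,1], 0 < ν ≤ 1 ≤ L. Then there is a constant c = c(n,p,ν,L) such that for all (x,u) ∈ Ω × ℝ and all ξ₁, ξ₂ ∈ ℝⁿ: (1/c)|V_s(ξ₁) − V_s(ξ₂)|² ≤ f(x,u,ξ₁) − f(x,u,ξ₂) − ⟨∂f(x,u,ξ₂), ξ₁ − ξ₂⟩. -/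
/-!
Both sides are comparable to `(s + |ξ₁| + |ξ₂|) ^ (p - 2) * |ξ₁ - ξ₂|²`; write `M = s + |ξ₁| + |ξ₂|`.
For the `V`-side this is an upper bound: if `|ξ₁ - ξ₂| ≥ M / 4`, each `|V_s(ξᵢ)|` is at most
`M ^ (p / 2)`; otherwise `s + |ξ₁|` and `s + |ξ₂|` both lie in `[M / 4, 4 M]` and the mean value
theorem for `t ↦ t ^ ((p - 2) / 2)` applies. For the Taylor remainder `g 1 - g 0 - g' 0` of
`g t = f (ξ₂ + t (ξ₁ - ξ₂))`, convexity of `g` gives the lower bound `(1 - b) (b - a) inf g''` over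
any `(a, b) ⊆ [0, 1]`. On a subinterval within `1 / 4` of the endpoint of larger norm,
`s + |ξ₂ + t (ξ₁ - ξ₂)|` stays in `[M / 4, 4 M]`, so the ellipticity bound gives
`g'' ≥ ν 4 ^ (-|p - 2|) M ^ (p - 2) |ξ₁ - ξ₂|²` there.
-/

open Real Set

lemma rpow_mem_Icc_of_mem_Icc {M x : ℝ} (α : ℝ) (hM : 0 < M) (hx : x ∈ Icc (M / 4) (4 * M)) :
    x ^ α ∈ Icc (4 ^ (-|α|) * M ^ α) (4 ^ |α| * M ^ α) := by
  have hxM : 0 < x / M := div_pos (by linarith [hx.1]) hM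
  have hlog : |log (x / M) * α| ≤ log 4 * |α| := by
    rw [abs_mul]
    refine mul_le_mul_of_nonneg_right (abs_le.2 ⟨?_, ?_⟩) (abs_nonneg α)
    · rw [neg_le, ← log_inv, log_le_log_iff (by positivity) (by norm_num), inv_div,
        div_le_iff₀ (by linarith [hx.1])]
      linarith [hx.1]
    · rw [log_le_log_iff hxM (by norm_num), div_le_iff₀ hM]
      exact hx.2
  have hsplit : x ^ α = (x / M) ^ α * M ^ α := by
    rw [div_rpow (by linarith [hx.1]) hM.le, div_mul_cancel₀ _ (rpow_pos_of_pos hM α).ne']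
  rw [hsplit, rpow_def_of_pos hxM, rpow_def_of_pos (by norm_num : (0:ℝ) < 4),
    rpow_def_of_pos (by norm_num : (0:ℝ) < 4)]
  have hMα := rpow_pos_of_pos hM α
  constructor
  · exact mul_le_mul_of_nonneg_right (exp_le_exp.2 (by linarith [(abs_le.1 hlog).1])) hMα.le
  · exact mul_le_mul_of_nonneg_right (exp_le_exp.2 (abs_le.1 hlog).2) hMα.le

lemma abs_rpow_sub_rpow_le {M x y : ℝ} (α : ℝ) (hM : 0 < M) (hx : x ∈ Icc (M / 4) (4 * M))
    (hy : y ∈ Icc (M / 4) (4 * M)) :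
    |x ^ α - y ^ α| ≤ |α| * 4 ^ |α - 1| * M ^ (α - 1) * |x - y| := by
  have hpos : ∀ t ∈ Icc (M / 4) (4 * M), 0 < t := fun t ht => by linarith [ht.1]
  have := (convex_Icc (M / 4) (4 * M)).norm_image_sub_le_of_norm_hasDerivWithin_le
    (f := fun t => t ^ α)
    (fun t ht => (hasDerivAt_rpow_const (Or.inl (hpos t ht).ne')).hasDerivWithinAt)
    (C := |α| * 4 ^ |α - 1| * M ^ (α - 1)) (fun t ht => ?_) hy hx
  · simpa only [Real.norm_eq_abs] using this
  rw [Real.norm_eq_abs, abs_mul, abs_of_pos (rpow_pos_of_pos (hpos t ht) _), mul_assoc]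
  exact mul_le_mul_of_nonneg_left (rpow_mem_Icc_of_mem_Icc (α - 1) hM ht).2 (abs_nonneg α)

section VFunction

variable {E : Type*} [NormedAddCommGroup E] [NormedSpace ℝ E] {s α : ℝ}

/-- The paper's `V_s` with exponent `(p - 2) / 2` replaced by a general `α`. -/
noncomputable def vFun (s α : ℝ) (ξ : E) : E := (s + ‖ξ‖) ^ α • ξ

lemma norm_vFun_le (hs : 0 ≤ s) (ξ : E) : ‖vFun s α ξ‖ ≤ (s + ‖ξ‖) ^ (α + 1) := by
  rcases (add_nonneg hs (norm_nonneg ξ)).eq_or_lt with h0 | hpos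
  · have : ξ = 0 := norm_eq_zero.1 (by linarith [norm_nonneg ξ])
    simpa [vFun, this] using rpow_nonneg hs (α + 1)
  calc ‖vFun s α ξ‖ = (s + ‖ξ‖) ^ α * ‖ξ‖ := by
        rw [vFun, norm_smul, Real.norm_eq_abs, abs_of_pos (rpow_pos_of_pos hpos α)]
    _ ≤ (s + ‖ξ‖) ^ α * (s + ‖ξ‖) := by gcongr; linarith
    _ = (s + ‖ξ‖) ^ (α + 1) := (rpow_add_one hpos.ne' α).symm

lemma norm_vFun_sub_le_of_le (hs : 0 ≤ s) (hα : 0 ≤ α + 1) {ξ₁ ξ₂ : E}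
    (h : s + ‖ξ₁‖ + ‖ξ₂‖ ≤ 4 * ‖ξ₁ - ξ₂‖) :
    ‖vFun s α ξ₁ - vFun s α ξ₂‖ ≤ 8 * (s + ‖ξ₁‖ + ‖ξ₂‖) ^ α * ‖ξ₁ - ξ₂‖ := by
  set M := s + ‖ξ₁‖ + ‖ξ₂‖
  rcases eq_or_ne ξ₁ ξ₂ with rfl | hne
  · simp
  have hM : 0 < M := by
    linarith [norm_pos_iff.2 (sub_ne_zero.2 hne), norm_sub_le ξ₁ ξ₂]
  have hle : ∀ ξ : E, s + ‖ξ‖ ≤ M → ‖vFun s α ξ‖ ≤ M ^ (α + 1) := fun ξ hξ =>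
    (norm_vFun_le hs ξ).trans (rpow_le_rpow (by positivity) hξ hα)
  calc ‖vFun s α ξ₁ - vFun s α ξ₂‖ ≤ ‖vFun s α ξ₁‖ + ‖vFun s α ξ₂‖ := norm_sub_le _ _
    _ ≤ 2 * (M ^ α * M) := by
        rw [← rpow_add_one hM.ne']
        linarith [hle ξ₁ (by simp [M]), hle ξ₂ (by linarith [norm_nonneg ξ₁])]
    _ ≤ 8 * M ^ α * ‖ξ₁ - ξ₂‖ := by nlinarith [rpow_nonneg hM.le α]

lemma norm_vFun_sub_le_of_lt {ξ₁ ξ₂ : E} (hs : 0 ≤ s) (h : 4 * ‖ξ₁ - ξ₂‖ < s + ‖ξ₁‖ + ‖ξ₂‖) :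
    ‖vFun s α ξ₁ - vFun s α ξ₂‖ ≤
      (4 ^ |α| + |α| * 4 ^ |α - 1|) * (s + ‖ξ₁‖ + ‖ξ₂‖) ^ α * ‖ξ₁ - ξ₂‖ := by
  set M := s + ‖ξ₁‖ + ‖ξ₂‖
  set a₁ := s + ‖ξ₁‖
  set a₂ := s + ‖ξ₂‖
  have hM : 0 < M := by linarith [norm_nonneg (ξ₁ - ξ₂)]
  have hdiff : |a₁ - a₂| ≤ ‖ξ₁ - ξ₂‖ := by
    simpa [a₁, a₂] using abs_norm_sub_norm_le ξ₁ ξ₂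
  obtain ⟨hd₁, hd₂⟩ := abs_le.1 hdiff
  have ha₁ : a₁ ∈ Icc (M / 4) (4 * M) := ⟨by linarith, by linarith [norm_nonneg ξ₂]⟩
  have ha₂ : a₂ ∈ Icc (M / 4) (4 * M) := ⟨by linarith, by linarith [norm_nonneg ξ₁]⟩
  have hsplit : vFun s α ξ₁ - vFun s α ξ₂ = a₁ ^ α • (ξ₁ - ξ₂) + (a₁ ^ α - a₂ ^ α) • ξ₂ := by
    simp only [vFun, smul_sub, sub_smul]; abel
  have hterm₁ : ‖a₁ ^ α • (ξ₁ - ξ₂)‖ ≤ 4 ^ |α| * M ^ α * ‖ξ₁ - ξ₂‖ := by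
    rw [norm_smul, Real.norm_eq_abs, abs_of_nonneg (rpow_nonneg (by linarith [ha₁.1]) α)]
    gcongr
    exact (rpow_mem_Icc_of_mem_Icc α hM ha₁).2
  have hterm₂ : ‖(a₁ ^ α - a₂ ^ α) • ξ₂‖ ≤ |α| * 4 ^ |α - 1| * M ^ α * ‖ξ₁ - ξ₂‖ := by
    rw [norm_smul, Real.norm_eq_abs]
    calc |a₁ ^ α - a₂ ^ α| * ‖ξ₂‖ ≤ (|α| * 4 ^ |α - 1| * M ^ (α - 1) * ‖ξ₁ - ξ₂‖) * M := by
          gcongr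
          · exact (abs_rpow_sub_rpow_le α hM ha₁ ha₂).trans (by gcongr)
          · linarith [norm_nonneg ξ₁]
      _ = |α| * 4 ^ |α - 1| * M ^ α * ‖ξ₁ - ξ₂‖ := by
          rw [rpow_sub_one hM.ne' α]; field_simp
  rw [hsplit, add_mul, add_mul]
  exact (norm_add_le _ _).trans (add_le_add hterm₁ hterm₂)

lemma exists_norm_vFun_sub_le (hs : 0 ≤ s) (hα : 0 ≤ α + 1) :
    ∃ C, 0 < C ∧ ∀ ξ₁ ξ₂ : E,
      ‖vFun s α ξ₁ - vFun s α ξ₂‖ ≤ C * (s + ‖ξ₁‖ + ‖ξ₂‖) ^ α * ‖ξ₁ - ξ₂‖ := by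
  refine ⟨8 + (4 ^ |α| + |α| * 4 ^ |α - 1|), by positivity, fun ξ₁ ξ₂ => ?_⟩
  have hMα : 0 ≤ (s + ‖ξ₁‖ + ‖ξ₂‖) ^ α := rpow_nonneg (by positivity) α
  rcases le_or_gt (s + ‖ξ₁‖ + ‖ξ₂‖) (4 * ‖ξ₁ - ξ₂‖) with h | h
  · refine (norm_vFun_sub_le_of_le hs hα h).trans ?_
    gcongr ?_ * _ * _
    linarith [show (0:ℝ) ≤ 4 ^ |α| + |α| * 4 ^ |α - 1| by positivity]
  · refine (norm_vFun_sub_le_of_lt hs h).trans ?_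
    gcongr ?_ * _ * _
    linarith

end VFunction

section Taylor

lemma mul_sub_le_sub_of_monotone_deriv {g g' : ℝ → ℝ} (hg : ∀ t, HasDerivAt g (g' t) t)
    (hmono : Monotone g') {x y : ℝ} (hxy : x ≤ y) : g' x * (y - x) ≤ g y - g x :=
  (convex_Icc x y).mul_sub_le_image_sub_of_le_deriv
    (fun t _ => (hg t).continuousAt.continuousWithinAt)
    (fun t _ => (hg t).differentiableAt.differentiableWithinAt)
    (fun t ht => (hg t).deriv ▸ hmono (interior_Icc.subset ht).1.le)
    x ⟨le_rfl, hxy⟩ y ⟨hxy, le_rfl⟩ hxy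

lemma mul_le_taylor_remainder {g g' g'' : ℝ → ℝ} {a b m : ℝ}
    (hg : ∀ t, HasDerivAt g (g' t) t) (hg' : ∀ t, HasDerivAt g' (g'' t) t)
    (hg'' : ∀ t, 0 ≤ g'' t) (ha : 0 ≤ a) (hab : a ≤ b) (hb : b ≤ 1)
    (hm : ∀ t ∈ Ioo a b, m ≤ g'' t) :
    (1 - b) * (b - a) * m ≤ g 1 - g 0 - g' 0 := by
  have hmono : Monotone g' := monotone_of_deriv_nonneg (fun t => (hg' t).differentiableAt)
    (fun t => (hg' t).deriv ▸ hg'' t)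
  have h₁ : g' b * (1 - b) ≤ g 1 - g b := mul_sub_le_sub_of_monotone_deriv hg hmono hb
  have h₂ : g' 0 * (b - 0) ≤ g b - g 0 := mul_sub_le_sub_of_monotone_deriv hg hmono (ha.trans hab)
  have h₃ : m * (b - a) ≤ g' b - g' a :=
    (convex_Icc a b).mul_sub_le_image_sub_of_le_deriv
      (fun t _ => (hg' t).continuousAt.continuousWithinAt)
      (fun t _ => (hg' t).differentiableAt.differentiableWithinAt)
      (fun t ht => (hg' t).deriv ▸ hm t (interior_Icc.subset ht))
      a ⟨le_rfl, hab⟩ b ⟨hab, le_rfl⟩ hab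
  calc (1 - b) * (b - a) * m ≤ (1 - b) * (g' b - g' a) := by
        rw [mul_assoc, mul_comm (b - a)]; exact mul_le_mul_of_nonneg_left h₃ (by linarith)
    _ ≤ (1 - b) * (g' b - g' 0) := by
        have := hmono ha
        gcongr
    _ ≤ g 1 - g 0 - g' 0 := by linarith

variable {E G : Type*} [NormedAddCommGroup E] [NormedSpace ℝ E]
  [NormedAddCommGroup G] [NormedSpace ℝ G]

lemma hasDerivAt_comp_add_smul {F : E → G} {ξ d : E} {t : ℝ}
    (hF : DifferentiableAt ℝ F (ξ + t • d)) :
    HasDerivAt (fun t : ℝ => F (ξ + t • d)) (fderiv ℝ F (ξ + t • d) d) t := by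
  have hline : HasDerivAt (fun t : ℝ => ξ + t • d) d t := by
    simpa using ((hasDerivAt_id t).smul_const d).const_add ξ
  exact hF.hasFDerivAt.comp_hasDerivAt t hline

end Taylor

lemma add_norm_mem_Icc_of_norm_sub_le {E : Type*} [SeminormedAddCommGroup E] {s : ℝ} (hs : 0 ≤ s)
    {η₁ η₂ ζ : E} (h : ‖η₂‖ ≤ ‖η₁‖)
    (hζ : ‖ζ - η₁‖ ≤ ‖η₁ - η₂‖ / 4) :
    s + ‖ζ‖ ∈ Icc ((s + ‖η₁‖ + ‖η₂‖) / 4) (4 * (s + ‖η₁‖ + ‖η₂‖)) := by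
  have hd : ‖η₁ - η₂‖ ≤ ‖η₁‖ + ‖η₂‖ := norm_sub_le η₁ η₂
  have hlow : ‖η₁‖ - ‖ζ‖ ≤ ‖ζ - η₁‖ := norm_sub_rev η₁ ζ ▸ norm_sub_norm_le η₁ ζ
  have hupp : ‖ζ‖ ≤ ‖ζ - η₁‖ + ‖η₁‖ := norm_le_norm_sub_add ζ η₁
  constructor <;> linarith [norm_nonneg η₂]

lemma exists_Ioo_add_norm_line_mem_Icc {E : Type*} [NormedAddCommGroup E] [NormedSpace ℝ E]
    {s : ℝ} (hs : 0 ≤ s) (ξ₁ ξ₂ : E) :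
    ∃ a b : ℝ, 0 ≤ a ∧ a ≤ b ∧ b ≤ 1 ∧ 1 / 64 ≤ (1 - b) * (b - a) ∧ ∀ t ∈ Ioo a b,
      s + ‖ξ₂ + t • (ξ₁ - ξ₂)‖ ∈ Icc ((s + ‖ξ₁‖ + ‖ξ₂‖) / 4) (4 * (s + ‖ξ₁‖ + ‖ξ₂‖)) := by
  rcases le_total ‖ξ₂‖ ‖ξ₁‖ with h | h
  · refine ⟨3 / 4, 7 / 8, by norm_num, by norm_num, by norm_num, by norm_num, fun t ht => ?_⟩
    refine add_norm_mem_Icc_of_norm_sub_le hs h ?_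
    have : ξ₂ + t • (ξ₁ - ξ₂) - ξ₁ = (1 - t) • (ξ₂ - ξ₁) := by module
    rw [this, norm_smul, Real.norm_eq_abs, abs_of_pos (by linarith [ht.2]), norm_sub_rev]
    nlinarith [ht.1, norm_nonneg (ξ₁ - ξ₂)]
  · refine ⟨0, 1 / 4, le_rfl, by norm_num, by norm_num, by norm_num, fun t ht => ?_⟩
    rw [add_right_comm]
    refine add_norm_mem_Icc_of_norm_sub_le hs h ?_
    rw [add_sub_cancel_left, norm_smul, Real.norm_eq_abs, abs_of_pos ht.1, norm_sub_rev]
    nlinarith [ht.2, norm_nonneg (ξ₂ - ξ₁)]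

lemma le_taylor_remainder {E : Type*} [NormedAddCommGroup E] [NormedSpace ℝ E] {F : E → ℝ}
    {s ν β : ℝ} (hF : ContDiff ℝ 2 F) (hs : 0 ≤ s) (hν : 0 ≤ ν)
    (hF'' : ∀ ξ lam : E,
      ν * (s + ‖ξ‖) ^ β * ‖lam‖ ^ 2 ≤ fderiv ℝ (fun η => fderiv ℝ F η lam) ξ lam)
    (ξ₁ ξ₂ : E) :
    ν * 4 ^ (-|β|) / 64 * (s + ‖ξ₁‖ + ‖ξ₂‖) ^ β * ‖ξ₁ - ξ₂‖ ^ 2 ≤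
      F ξ₁ - F ξ₂ - fderiv ℝ F ξ₂ (ξ₁ - ξ₂) := by
  rcases eq_or_ne ξ₁ ξ₂ with rfl | hne
  · simp
  set M := s + ‖ξ₁‖ + ‖ξ₂‖
  set d := ξ₁ - ξ₂
  have hM : 0 < M := by
    linarith [norm_pos_iff.2 (sub_ne_zero.2 hne), norm_sub_le ξ₁ ξ₂]
  have hF' : Differentiable ℝ F := hF.differentiable (by norm_num)
  have hF'd : Differentiable ℝ (fun η => fderiv ℝ F η d) :=
    ((hF.fderiv_right (m := 1) (by norm_num)).differentiable (by norm_num)).clm_apply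
      (differentiable_const d)
  obtain ⟨a, b, ha, hab, hb, hab64, hline⟩ := exists_Ioo_add_norm_line_mem_Icc hs ξ₁ ξ₂
  have hm : 0 ≤ ν * 4 ^ (-|β|) * M ^ β * ‖d‖ ^ 2 := by positivity
  have key := mul_le_taylor_remainder (g := fun t => F (ξ₂ + t • d))
    (fun t => hasDerivAt_comp_add_smul (hF' _)) (fun t => hasDerivAt_comp_add_smul (hF'd _))
    (fun t => (hF'' _ d).trans' (mul_nonneg (mul_nonneg hν (rpow_nonneg (by positivity) β))
      (by positivity)))
    ha hab hb (m := ν * 4 ^ (-|β|) * M ^ β * ‖d‖ ^ 2) (fun t ht => (hF'' _ d).trans' ?_)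
  · simp only [zero_smul, add_zero, one_smul, d, add_sub_cancel] at key
    calc ν * 4 ^ (-|β|) / 64 * M ^ β * ‖d‖ ^ 2
        = 1 / 64 * (ν * 4 ^ (-|β|) * M ^ β * ‖d‖ ^ 2) := by ring
      _ ≤ (1 - b) * (b - a) * (ν * 4 ^ (-|β|) * M ^ β * ‖d‖ ^ 2) := by gcongr
      _ ≤ _ := key
  · rw [mul_assoc ν]
    gcongr
    exact (rpow_mem_Icc_of_mem_Icc β hM (hline t ht)).1

theorem taylor_convexity_V_general (n : ℕ) (p s ν L : ℝ)
    (hp : 1 < p) (hs : s ∈ Set.Icc (0:ℝ) 1) (hν : 0 < ν) :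
    ∃ c : ℝ, 0 < c ∧
      ∀ (Ω : Set (EuclideanSpace ℝ (Fin n)))
        (f : EuclideanSpace ℝ (Fin n) → ℝ → EuclideanSpace ℝ (Fin n) → ℝ),
        (∀ x ∈ Ω, ∀ u : ℝ, ContDiff ℝ 2 (f x u)) →
        (∀ x ∈ Ω, ∀ (u : ℝ) (ξ lam : EuclideanSpace ℝ (Fin n)),
          ν * (s + ‖ξ‖) ^ (p - 2) * ‖lam‖ ^ (2:ℕ) ≤
              fderiv ℝ (fun η => fderiv ℝ (f x u) η lam) ξ lam ∧
            fderiv ℝ (fun η => fderiv ℝ (f x u) η lam) ξ lam ≤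
              L * (s + ‖ξ‖) ^ (p - 2) * ‖lam‖ ^ (2:ℕ)) →
        ∀ x ∈ Ω, ∀ (u : ℝ) (ξ₁ ξ₂ : EuclideanSpace ℝ (Fin n)),
          (1/c) * ‖(s + ‖ξ₁‖) ^ ((p - 2)/2) • ξ₁ - (s + ‖ξ₂‖) ^ ((p - 2)/2) • ξ₂‖ ^ (2:ℕ) ≤
            f x u ξ₁ - f x u ξ₂ - fderiv ℝ (f x u) ξ₂ (ξ₁ - ξ₂) := by
  obtain ⟨C, hC, hV⟩ := exists_norm_vFun_sub_le (E := EuclideanSpace ℝ (Fin n)) (α := (p - 2) / 2)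
    hs.1 (by linarith)
  refine ⟨64 * C ^ 2 / (ν * 4 ^ (-|p - 2|)), by positivity, ?_⟩
  intro Ω f hf hf'' x hx u ξ₁ ξ₂
  have hT := le_taylor_remainder (hf x hx u) hs.1 hν.le (fun ξ lam => (hf'' x hx u ξ lam).1) ξ₁ ξ₂
  set M := s + ‖ξ₁‖ + ‖ξ₂‖
  have hVsq : ‖vFun s ((p - 2) / 2) ξ₁ - vFun s ((p - 2) / 2) ξ₂‖ ^ 2 ≤
      C ^ 2 * M ^ (p - 2) * ‖ξ₁ - ξ₂‖ ^ 2 := by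
    have hM : 0 ≤ M := by linarith [hs.1, norm_nonneg ξ₁, norm_nonneg ξ₂]
    calc _ ≤ (C * M ^ ((p - 2) / 2) * ‖ξ₁ - ξ₂‖) ^ 2 := by gcongr; exact hV ξ₁ ξ₂
      _ = C ^ 2 * M ^ (p - 2) * ‖ξ₁ - ξ₂‖ ^ 2 := by
        rw [mul_pow, mul_pow, ← rpow_mul_natCast hM]; norm_num
  calc _ ≤ 1 / (64 * C ^ 2 / (ν * 4 ^ (-|p - 2|))) * (C ^ 2 * M ^ (p - 2) * ‖ξ₁ - ξ₂‖ ^ 2) := by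
        gcongr; exact hVsq
    _ = ν * 4 ^ (-|p - 2|) / 64 * M ^ (p - 2) * ‖ξ₁ - ξ₂‖ ^ 2 := by field_simp
    _ ≤ _ := hT

/-- Strict convexity estimate via the `V`-function: if `ξ ↦ f(x,u,ξ)` is `C²` with
`ν(s+|ξ|)^(p-2)|λ|² ≤ ⟨∂²f(x,u,ξ)λ,λ⟩ ≤ L(s+|ξ|)^(p-2)|λ|²`, then
`(1/c)|V_s(ξ₁)-V_s(ξ₂)|² ≤ f(x,u,ξ₁)-f(x,u,ξ₂)-⟨∂f(x,u,ξ₂),ξ₁-ξ₂⟩` with `c = c(n,p,ν,L)`. -/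
theorem taylor_convexity_V (n : ℕ) (p s ν L : ℝ)
    (hp : 1 < p) (hs : s ∈ Set.Icc (0:ℝ) 1) (hν : 0 < ν) (hν1 : ν ≤ 1) (hL : 1 ≤ L) :
    ∃ c : ℝ, 0 < c ∧
      ∀ (Ω : Set (EuclideanSpace ℝ (Fin n)))
        (f : EuclideanSpace ℝ (Fin n) → ℝ → EuclideanSpace ℝ (Fin n) → ℝ),
        (∀ x ∈ Ω, ∀ u : ℝ, ContDiff ℝ 2 (f x u)) →
        (∀ x ∈ Ω, ∀ (u : ℝ) (ξ lam : EuclideanSpace ℝ (Fin n)),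
          ν * (s + ‖ξ‖) ^ (p - 2) * ‖lam‖ ^ (2:ℕ) ≤
              fderiv ℝ (fun η => fderiv ℝ (f x u) η lam) ξ lam ∧
            fderiv ℝ (fun η => fderiv ℝ (f x u) η lam) ξ lam ≤
              L * (s + ‖ξ‖) ^ (p - 2) * ‖lam‖ ^ (2:ℕ)) →
        ∀ x ∈ Ω, ∀ (u : ℝ) (ξ₁ ξ₂ : EuclideanSpace ℝ (Fin n)),
          (1/c) * ‖(s + ‖ξ₁‖) ^ ((p - 2)/2) • ξ₁ - (s + ‖ξ₂‖) ^ ((p - 2)/2) • ξ₂‖ ^ (2:ℕ) ≤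
            f x u ξ₁ - f x u ξ₂ - fderiv ℝ (f x u) ξ₂ (ξ₁ - ξ₂) :=
  taylor_convexity_V_general n p s ν L hp hs hν
end

section
/- Let h : ℝⁿ → ℝ be a C¹ convex function satisfying ν(s+|ξ|)^p ≤ h(ξ) ≤ L(s+|ξ|)^p for all ξ ∈ ℝⁿ, where p > 1, s ∈ [0,1], 0 < ν ≤ 1 ≤ L. Then there is a constant c depending only on p and L such that |∂h(ξ)| ≤ c(s+|ξ|)^{p−1} for all ξ ∈ ℝⁿ. -/
/-!
Convexity gives the subgradient inequality `∂h(ξ)·w ≤ h(ξ + w) - h(ξ)`. Taking `|w| ≤ t := s + |ξ|`,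
the upper growth bound gives `h(ξ + w) ≤ L(2t)^p`, while `h(ξ) ≥ 0` by the lower bound; hence
`|∂h(ξ)| ≤ L(2t)^p / t = 2^p L t^(p-1)`. When `t = 0`, `ξ` is a minimum of `h` and `∂h(ξ) = 0`.
-/

open Metric

variable {E : Type*} [NormedAddCommGroup E] [NormedSpace ℝ E]

theorem ConvexOn.add_fderiv_sub_le {h : E → ℝ} (hc : ConvexOn ℝ Set.univ h) {x : E}
    (hd : DifferentiableAt ℝ h x) (y : E) : h x + fderiv ℝ h x (y - x) ≤ h y := by
  set g := h ∘ AffineMap.lineMap (k := ℝ) x y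
  have hg : ConvexOn ℝ Set.univ g := hc.comp_affineMap _
  have hg' : HasDerivAt g (fderiv ℝ h x (y - x)) 0 := by
    refine HasFDerivAt.comp_hasDerivAt (0 : ℝ) ?_ AffineMap.hasDerivAt_lineMap
    simpa using hd.hasFDerivAt
  have := hg.le_slope_of_hasDerivAt (Set.mem_univ 0) (Set.mem_univ 1) one_pos hg'
  simp only [slope_def_field, g, Function.comp_apply, AffineMap.lineMap_apply_zero,
    AffineMap.lineMap_apply_one, sub_zero, div_one] at this
  linarith

theorem StrongDual.norm_le_of_forall_closedBall_le (f : StrongDual ℝ E) {r c : ℝ} (hr : 0 < r)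
    (hf : ∀ z ∈ closedBall (0 : E) r, f z ≤ c) : ‖f‖ ≤ c / r := by
  refine ContinuousLinearMap.opNorm_bound_of_ball_bound hr c f fun z hz => abs_le.2 ⟨?_, hf z hz⟩
  have := hf (-z) (by simpa using hz)
  rw [map_neg] at this
  linarith

theorem ConvexOn.norm_fderiv_le_of_closedBall_le {h : E → ℝ} (hc : ConvexOn ℝ Set.univ h) {x : E}
    (hd : DifferentiableAt ℝ h x) {r M : ℝ} (hr : 0 < r) (hM : ∀ y ∈ closedBall x r, h y ≤ M) :
    ‖fderiv ℝ h x‖ ≤ (M - h x) / r := by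
  refine StrongDual.norm_le_of_forall_closedBall_le _ hr fun z hz => ?_
  have hxz : x + z ∈ closedBall x r := by simpa using hz
  have := hc.add_fderiv_sub_le hd (x + z)
  rw [add_sub_cancel_left] at this
  linarith [hM _ hxz]

theorem gradient_growth_of_convex_general (n : ℕ) (p s ν L : ℝ)
    (hp : 1 < p) (hs : s ∈ Set.Icc (0:ℝ) 1) (hν : 0 < ν) (hL : 1 ≤ L) :
    ∃ c : ℝ, 0 < c ∧
      ∀ h : EuclideanSpace ℝ (Fin n) → ℝ,
        ContDiff ℝ 1 h →
        ConvexOn ℝ Set.univ h →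
        (∀ ξ, ν * (s + ‖ξ‖) ^ p ≤ h ξ) →
        (∀ ξ, h ξ ≤ L * (s + ‖ξ‖) ^ p) →
        ∀ ξ : EuclideanSpace ℝ (Fin n), ‖fderiv ℝ h ξ‖ ≤ c * (s + ‖ξ‖) ^ (p - 1) := by
  refine ⟨2 ^ p * L, by positivity, fun h hcd hconv hlow hup ξ => ?_⟩
  have hd : DifferentiableAt ℝ h ξ := (hcd.differentiable one_ne_zero) ξ
  have hs0 : 0 ≤ s := hs.1
  have hnonneg : ∀ η, 0 ≤ h η := fun η => (by positivity : (0:ℝ) ≤ _).trans (hlow η)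
  obtain ht | ht := (by positivity : 0 ≤ s + ‖ξ‖).eq_or_lt
  · have hmin : IsLocalMin h ξ := Filter.Eventually.of_forall fun η => by
      have := hup ξ
      rw [← ht, Real.zero_rpow (by linarith), mul_zero] at this
      exact this.trans (hnonneg η)
    rw [hmin.fderiv_eq_zero, norm_zero]
    positivity
  · set t := s + ‖ξ‖
    have hball : ∀ η ∈ closedBall ξ t, h η ≤ L * (2 * t) ^ p := fun η hη => by
      refine (hup η).trans (mul_le_mul_of_nonneg_left ?_ (by linarith))
      have := norm_le_norm_add_norm_sub' η ξ
      rw [mem_closedBall, dist_eq_norm] at hη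
      exact Real.rpow_le_rpow (by linarith [norm_nonneg η]) (by linarith) (by linarith)
    calc ‖fderiv ℝ h ξ‖ ≤ (L * (2 * t) ^ p - h ξ) / t :=
          hconv.norm_fderiv_le_of_closedBall_le hd ht hball
      _ ≤ L * (2 * t) ^ p / t := by gcongr; linarith [hnonneg ξ]
      _ = 2 ^ p * L * t ^ (p - 1) := by
          rw [Real.mul_rpow zero_le_two ht.le, Real.rpow_sub_one ht.ne']
          ring

/-- If `h : ℝⁿ → ℝ` is `C¹`, convex and satisfies `ν(s+|ξ|)^p ≤ h(ξ) ≤ L(s+|ξ|)^p`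
(`p > 1`, `s ∈ [0,1]`, `0 < ν ≤ 1 ≤ L`), then `|∂h(ξ)| ≤ c(p,L)(s+|ξ|)^(p-1)`. -/
theorem gradient_growth_of_convex (n : ℕ) (p s ν L : ℝ)
    (hp : 1 < p) (hs : s ∈ Set.Icc (0:ℝ) 1) (hν : 0 < ν) (hν1 : ν ≤ 1) (hL : 1 ≤ L) :
    ∃ c : ℝ, 0 < c ∧
      ∀ h : EuclideanSpace ℝ (Fin n) → ℝ,
        ContDiff ℝ 1 h →
        ConvexOn ℝ Set.univ h →
        (∀ ξ, ν * (s + ‖ξ‖) ^ p ≤ h ξ) →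
        (∀ ξ, h ξ ≤ L * (s + ‖ξ‖) ^ p) →
        ∀ ξ : EuclideanSpace ℝ (Fin n), ‖fderiv ℝ h ξ‖ ≤ c * (s + ‖ξ‖) ^ (p - 1) :=
  gradient_growth_of_convex_general n p s ν L hp hs hν hL
end

section
/- Let μ ∈ L¹_loc(ℝⁿ) vanish outside a bounded set Ω, with ∫₀^∞ |{x ∈ ℝⁿ : |μ(x)| > t}|^{1/n} dt < ∞ (i.e. μ ∈ L(n,1)). Fix δ ∈ (0,1/4) and q ∈ (1,n), and for x₀ ∈ Ω and r > 0 define S_{r,δ,q}(x₀) := ∑_{j=0}^∞ δ^j r (⨍_{B_{δ^j r}(x₀)} |μ|^q dx)^{1/q}. Then there is a constant c = c(n,q,δ) such that sup_{x₀∈Ω} S_{r,δ,q}(x₀) ≤ c ∫₀^∞ |{x : |μ(x)| > t}|^{1/n} dt. -/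
/-!
By the layer-cake formula and monotonicity of the distribution function `m(t) = |{|μ| > t}|`,
`⨍_B |μ|^q ≤ q (∫₀^∞ min(m(t)/|B|, 1)^{1/q} dt)^q` on every ball `B`
(a Hardy-type form of `L(q,1) ⊆ L^q`). Multiplying by the radius `ρ_j = δ^j r`, summing over `j`
and exchanging sum and integral, it remains to bound, for fixed `t`, the series
`∑_j min(ρ_j, ρ_j^{1-n/q} (m(t)/|B_1|)^{1/q})`. Since `q < n`, its terms form two geometric
series meeting at `ρ ≈ (m(t)/|B_1|)^{1/n}`, so the series is `≲ m(t)^{1/n}`.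
-/

open MeasureTheory Set ENNReal Metric Module

lemma ofReal_mul_le_setLIntegral_Ioi_of_antitone {g : ℝ → ℝ≥0∞} (hg : Antitone g) (t : ℝ) :
    ENNReal.ofReal t * g t ≤ ∫⁻ s in Ioi 0, g s :=
  calc ENNReal.ofReal t * g t = ∫⁻ _ in Ioo 0 t, g t := by
        rw [setLIntegral_const, Real.volume_Ioo, sub_zero, mul_comm]
    _ ≤ ∫⁻ s in Ioo 0 t, g s := setLIntegral_mono' measurableSet_Ioo fun _ hs => hg hs.2.le
    _ ≤ ∫⁻ s in Ioi 0, g s := lintegral_mono_set Ioo_subset_Ioi_self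

lemma setLIntegral_Ioi_mul_rpow_le_of_antitone {h : ℝ → ℝ≥0∞} (hh : Antitone h) {q : ℝ}
    (hq : 1 ≤ q) :
    ∫⁻ t in Ioi 0, h t * ENNReal.ofReal (t ^ (q - 1)) ≤ (∫⁻ t in Ioi 0, h t ^ (1 / q)) ^ q := by
  set A := ∫⁻ t in Ioi 0, h t ^ (1 / q)
  have hroot : Antitone fun t => h t ^ (1 / q) :=
    fun s t hst => ENNReal.rpow_le_rpow (hh hst) (by positivity)
  have hpt : ∀ t ∈ Ioi (0 : ℝ),
      h t * ENNReal.ofReal (t ^ (q - 1)) ≤ h t ^ (1 / q) * A ^ (q - 1) := by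
    intro t ht
    have hsplit : h t = h t ^ (1 / q) * (h t ^ (1 / q)) ^ (q - 1) := by
      rw [← ENNReal.rpow_mul, ← ENNReal.rpow_add_of_nonneg _ _ (by positivity) (by positivity),
        show 1 / q + 1 / q * (q - 1) = 1 by field_simp; ring, ENNReal.rpow_one]
    calc h t * ENNReal.ofReal (t ^ (q - 1))
        = h t ^ (1 / q) * (ENNReal.ofReal t * h t ^ (1 / q)) ^ (q - 1) := by
          rw [ENNReal.mul_rpow_of_nonneg _ _ (by linarith),
            ENNReal.ofReal_rpow_of_nonneg (le_of_lt ht) (by linarith), mul_left_comm,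
            ← hsplit, mul_comm]
      _ ≤ h t ^ (1 / q) * A ^ (q - 1) := by
          gcongr
          exact ofReal_mul_le_setLIntegral_Ioi_of_antitone hroot t
  calc ∫⁻ t in Ioi 0, h t * ENNReal.ofReal (t ^ (q - 1))
      ≤ ∫⁻ t in Ioi 0, h t ^ (1 / q) * A ^ (q - 1) := setLIntegral_mono' measurableSet_Ioi hpt
    _ = A ^ q := by
      rw [lintegral_mul_const _ hroot.measurable, mul_comm]
      conv_rhs => rw [← sub_add_cancel q 1,
        ENNReal.rpow_add_of_nonneg _ _ (by linarith) zero_le_one, ENNReal.rpow_one]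

lemma lintegral_rpow_abs_le_of_distribution_le {α : Type*} [MeasurableSpace α] {ν : Measure α}
    {f : α → ℝ} (hf : AEMeasurable f ν) {q : ℝ} (hq : 1 ≤ q) {h : ℝ → ℝ≥0∞} (hh : Antitone h)
    (hdom : ∀ t > 0, ν {x | t < |f x|} ≤ h t) :
    ∫⁻ x, ENNReal.ofReal (|f x| ^ q) ∂ν ≤
      ENNReal.ofReal q * (∫⁻ t in Ioi 0, h t ^ (1 / q)) ^ q := by
  rw [lintegral_rpow_eq_lintegral_meas_lt_mul ν (.of_forall fun x => abs_nonneg (f x))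
    hf.abs (by linarith)]
  gcongr
  calc ∫⁻ t in Ioi 0, ν {x | t < |f x|} * ENNReal.ofReal (t ^ (q - 1))
      ≤ ∫⁻ t in Ioi 0, h t * ENNReal.ofReal (t ^ (q - 1)) :=
        setLIntegral_mono' measurableSet_Ioi fun t ht => by gcongr; exact hdom t ht
    _ ≤ _ := setLIntegral_Ioi_mul_rpow_le_of_antitone hh hq

lemma setLAverage_rpow_abs_le {α : Type*} [MeasurableSpace α] {ν : Measure α} {s : Set α}
    {f : α → ℝ} (hf : AEMeasurable f (ν.restrict s)) {q : ℝ} (hq : 1 ≤ q) {m : ℝ → ℝ≥0∞}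
    (hm : Antitone m) (hdom : ∀ t > 0, ν {x | t < |f x|} ≤ m t) :
    (⨍⁻ x in s, ENNReal.ofReal (|f x| ^ q) ∂ν) ^ (1 / q) ≤
      ENNReal.ofReal q ^ (1 / q) * ∫⁻ t in Ioi 0, min (m t / ν s) 1 ^ (1 / q) := by
  have hq0 : 0 < q := by linarith
  have hdom' : ∀ t > 0, ((ν s)⁻¹ • ν.restrict s) {x | t < |f x|} ≤ min (m t / ν s) 1 := by
    intro t ht
    rw [Measure.smul_apply, smul_eq_mul, ENNReal.div_eq_inv_mul]
    refine le_min ?_ ?_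
    · gcongr (ν s)⁻¹ * ?_
      exact (Measure.restrict_apply_le _ _).trans (hdom t ht)
    calc (ν s)⁻¹ * ν.restrict s {x | t < |f x|} ≤ (ν s)⁻¹ * ν s := by
          gcongr (ν s)⁻¹ * ?_
          exact (measure_mono (subset_univ _)).trans_eq (Measure.restrict_apply_univ s)
      _ ≤ 1 := ENNReal.inv_mul_le_one _
  have hmin : Antitone fun t => min (m t / ν s) 1 := fun a b hab =>
    min_le_min_right 1 (by gcongr; exact hm hab)
  calc (⨍⁻ x in s, ENNReal.ofReal (|f x| ^ q) ∂ν) ^ (1 / q)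
      ≤ (ENNReal.ofReal q * (∫⁻ t in Ioi 0, min (m t / ν s) 1 ^ (1 / q)) ^ q) ^ (1 / q) := by
        rw [setLAverage_eq']
        gcongr
        exact lintegral_rpow_abs_le_of_distribution_le (hf.smul_measure _) hq hmin hdom'
    _ = _ := by
        rw [ENNReal.mul_rpow_of_nonneg _ _ (by positivity), ← ENNReal.rpow_mul,
          mul_one_div_cancel hq0.ne', ENNReal.rpow_one]

lemma tsum_ofReal_pow_of_lt_one {a : ℝ} (ha₀ : 0 ≤ a) (ha₁ : a < 1) :
    ∑' i : ℕ, ENNReal.ofReal (a ^ i) = ENNReal.ofReal (1 - a)⁻¹ := by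
  rw [← tsum_geometric_of_lt_one ha₀ ha₁,
    ENNReal.ofReal_tsum_of_nonneg (fun _ => pow_nonneg ha₀ _)
      (summable_geometric_of_lt_one ha₀ ha₁)]

lemma rpow_neg_le_of_one_le_mul {w d E : ℝ} (hw : 0 < w) (hd : 0 ≤ d) (hE : 0 ≤ E)
    (h : 1 ≤ d * w) : w ^ (-E) ≤ d ^ E := by
  rw [Real.rpow_neg hw.le, inv_le_iff_one_le_mul₀ (by positivity), ← Real.mul_rpow hd hw.le]
  exact Real.one_le_rpow h hE

lemma tsum_ofReal_min_rpow_neg_geometric_le {δ E u : ℝ} (hδ₀ : 0 < δ) (hδ₁ : δ < 1)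
    (hE : 0 < E) (hu : 0 < u) :
    ∑' j : ℕ, ENNReal.ofReal (min (δ ^ j * u) ((δ ^ j * u) ^ (-E))) ≤
      ENNReal.ofReal ((1 - δ)⁻¹ + (1 - δ ^ E)⁻¹) := by
  have hδE₀ : 0 ≤ δ ^ E := by positivity
  have hδE₁ : δ ^ E < 1 := Real.rpow_lt_one hδ₀.le hδ₁ hE
  have hex : ∃ J : ℕ, δ ^ J * u ≤ 1 := by
    obtain ⟨J, hJ⟩ := exists_pow_lt_of_lt_one (one_div_pos.2 hu) hδ₁
    exact ⟨J, ((lt_div_iff₀ hu).1 hJ).le⟩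
  -- Split at the first `J` with `δ ^ J * u ≤ 1`: the terms before it are at most
  -- `(δ ^ E) ^ (J - 1 - j)`, those after it at most `δ ^ (j - J)`.
  set J := Nat.find hex
  rw [← Summable.sum_add_tsum_nat_add' (k := J) ENNReal.summable,
    ENNReal.ofReal_add (by positivity) (by positivity), add_comm (ENNReal.ofReal _)]
  gcongr
  · calc ∑ j ∈ Finset.range J, ENNReal.ofReal (min (δ ^ j * u) ((δ ^ j * u) ^ (-E)))
        ≤ ∑ j ∈ Finset.range J, ENNReal.ofReal ((δ ^ E) ^ (J - 1 - j)) := by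
          gcongr with j hj
          have hjJ : j < J := Finset.mem_range.1 hj
          have hJ₁ : 1 < δ ^ (J - 1) * u := lt_of_not_ge (Nat.find_min hex (by omega))
          refine (min_le_right _ _).trans ?_
          rw [Real.rpow_pow_comm hδ₀.le]
          refine rpow_neg_le_of_one_le_mul (by positivity) (by positivity) hE.le ?_
          rw [← mul_assoc, ← pow_add, Nat.sub_add_cancel (by omega)]
          exact hJ₁.le
      _ = ∑ i ∈ Finset.range J, ENNReal.ofReal ((δ ^ E) ^ i) :=
          Finset.sum_range_reflect (fun i => ENNReal.ofReal ((δ ^ E) ^ i)) J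
      _ ≤ ENNReal.ofReal (1 - δ ^ E)⁻¹ := by
          rw [← tsum_ofReal_pow_of_lt_one hδE₀ hδE₁]
          exact ENNReal.sum_le_tsum _
  · calc ∑' i, ENNReal.ofReal (min (δ ^ (i + J) * u) ((δ ^ (i + J) * u) ^ (-E)))
        ≤ ∑' i : ℕ, ENNReal.ofReal (δ ^ i) := by
          gcongr with i
          refine (min_le_left _ _).trans ?_
          rw [pow_add, mul_assoc]
          exact mul_le_of_le_one_right (by positivity) (Nat.find_spec hex)
      _ = ENNReal.ofReal (1 - δ)⁻¹ := tsum_ofReal_pow_of_lt_one hδ₀.le hδ₁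

lemma mul_min_div_pow_rpow_le {ρ σ q : ℝ} (n : ℕ) (hρ : 0 < ρ) (hσ : 0 < σ) (hq : 0 < q) :
    ρ * min (σ ^ n / ρ ^ n) 1 ^ (1 / q) ≤ σ * min (ρ / σ) ((ρ / σ) ^ (-((n : ℝ) / q - 1))) := by
  set u := ρ / σ
  have hu : 0 < u := div_pos hρ hσ
  have hσu : σ * u = ρ := mul_div_cancel₀ ρ hσ.ne'
  have hpow : σ ^ n / ρ ^ n = u ^ (-(n : ℝ)) := by
    rw [Real.rpow_neg hu.le, Real.rpow_natCast, div_pow, inv_div]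
  rw [mul_min_of_nonneg _ _ hσ.le, hσu]
  refine le_min (mul_le_of_le_one_right hρ.le
    (Real.rpow_le_one (by positivity) (min_le_right _ _) (by positivity))) ?_
  calc ρ * min (σ ^ n / ρ ^ n) 1 ^ (1 / q) ≤ ρ * (u ^ (-(n : ℝ))) ^ (1 / q) := by
        rw [← hpow]; gcongr; exact min_le_left _ _
    _ = σ * u ^ (-((n : ℝ) / q - 1)) := by
        rw [← Real.rpow_mul hu.le, show -((n : ℝ) / q - 1) = 1 + -(n : ℝ) * (1 / q) by ring,
          Real.rpow_add hu, Real.rpow_one, ← mul_assoc, hσu]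

lemma inv_one_sub_add_inv_one_sub_rpow_pos {δ E : ℝ} (hδ₀ : 0 ≤ δ) (hδ₁ : δ < 1) (hE : 0 < E) :
    0 < (1 - δ)⁻¹ + (1 - δ ^ E)⁻¹ := by
  have := Real.rpow_lt_one hδ₀ hδ₁ hE
  have : 0 < (1 - δ)⁻¹ := inv_pos.2 (by linarith)
  positivity

lemma tsum_ofReal_mul_min_div_rpow_le {n : ℕ} {q δ r : ℝ} (hq : 0 < q) (hqn : q < n)
    (hδ₀ : 0 < δ) (hδ₁ : δ < 1) (hr : 0 < r) (y : ℝ≥0∞) :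
    ∑' j : ℕ, ENNReal.ofReal (δ ^ j * r) *
        min (y / ENNReal.ofReal ((δ ^ j * r) ^ n)) 1 ^ (1 / q) ≤
      ENNReal.ofReal ((1 - δ)⁻¹ + (1 - δ ^ ((n : ℝ) / q - 1))⁻¹) * y ^ (1 / (n : ℝ)) := by
  have hn : (0 : ℝ) < n := hq.trans hqn
  have hE : 0 < (n : ℝ) / q - 1 := by rw [sub_pos, one_lt_div hq]; exact hqn
  set C := (1 - δ)⁻¹ + (1 - δ ^ ((n : ℝ) / q - 1))⁻¹
  rcases eq_or_ne y 0 with rfl | hy₀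
  · simp [ENNReal.zero_rpow_of_pos, hq]
  rcases eq_or_ne y ∞ with rfl | hy
  · have hC : 0 < C := inv_one_sub_add_inv_one_sub_rpow_pos hδ₀.le hδ₁ hE
    rw [ENNReal.top_rpow_of_pos (by positivity), ENNReal.mul_top (ENNReal.ofReal_pos.2 hC).ne']
    exact le_top
  obtain ⟨σ, hσ, rfl⟩ : ∃ σ : ℝ, 0 < σ ∧ y = ENNReal.ofReal (σ ^ n) :=
    ⟨y.toReal ^ (1 / (n : ℝ)), Real.rpow_pos_of_pos (ENNReal.toReal_pos hy₀ hy) _, by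
      rw [one_div, Real.rpow_inv_natCast_pow ENNReal.toReal_nonneg (by exact_mod_cast hn.ne'),
        ENNReal.ofReal_toReal hy]⟩
  have hσn : ENNReal.ofReal (σ ^ n) ^ (1 / (n : ℝ)) = ENNReal.ofReal σ := by
    rw [ENNReal.ofReal_rpow_of_nonneg (by positivity) (by positivity), ← Real.rpow_natCast,
      ← Real.rpow_mul hσ.le, mul_one_div_cancel hn.ne', Real.rpow_one]
  calc ∑' j : ℕ, ENNReal.ofReal (δ ^ j * r) *
        min (ENNReal.ofReal (σ ^ n) / ENNReal.ofReal ((δ ^ j * r) ^ n)) 1 ^ (1 / q)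
      ≤ ∑' j : ℕ, ENNReal.ofReal σ * ENNReal.ofReal
          (min (δ ^ j * (r / σ)) ((δ ^ j * (r / σ)) ^ (-((n : ℝ) / q - 1)))) := by
        refine ENNReal.tsum_le_tsum fun j => ?_
        have hρ : 0 < δ ^ j * r := by positivity
        rw [← ENNReal.ofReal_div_of_pos (by positivity), ← ENNReal.ofReal_one,
          ← ENNReal.ofReal_min, ENNReal.ofReal_rpow_of_nonneg (by positivity) (by positivity),
          ← ENNReal.ofReal_mul hρ.le, ← ENNReal.ofReal_mul hσ.le, ← mul_div_assoc]
        exact ENNReal.ofReal_le_ofReal (mul_min_div_pow_rpow_le n hρ hσ hq)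
    _ ≤ ENNReal.ofReal σ * ENNReal.ofReal C := by
        rw [ENNReal.tsum_mul_left]
        gcongr
        exact tsum_ofReal_min_rpow_neg_geometric_le hδ₀ hδ₁ hE (div_pos hr hσ)
    _ = ENNReal.ofReal C * ENNReal.ofReal (σ ^ n) ^ (1 / (n : ℝ)) := by rw [hσn, mul_comm]

lemma tsum_mul_setLAverage_ball_rpow_le {E : Type*} [NormedAddCommGroup E] [NormedSpace ℝ E]
    [FiniteDimensional ℝ E] [MeasurableSpace E] [BorelSpace E] (ν : Measure E)
    [ν.IsAddHaarMeasure] {n : ℕ} (hdim : finrank ℝ E = n) {q δ r : ℝ} (hq : 1 ≤ q) (hqn : q < n)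
    (hδ₀ : 0 < δ) (hδ₁ : δ < 1) (hr : 0 < r) {f : E → ℝ} (hf : AEMeasurable f ν) (x₀ : E) :
    ∑' j : ℕ, ENNReal.ofReal (δ ^ j * r) *
        (⨍⁻ x in ball x₀ (δ ^ j * r), ENNReal.ofReal (|f x| ^ q) ∂ν) ^ (1 / q) ≤
      ENNReal.ofReal q ^ (1 / q) * ENNReal.ofReal ((1 - δ)⁻¹ + (1 - δ ^ ((n : ℝ) / q - 1))⁻¹) *
        (ν (ball 0 1))⁻¹ ^ (1 / (n : ℝ)) * ∫⁻ t in Ioi 0, ν {x | t < |f x|} ^ (1 / (n : ℝ)) := by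
  set m : ℝ → ℝ≥0∞ := fun t => ν {x | t < |f x|}
  set ω := ν (ball 0 1)
  set C := (1 - δ)⁻¹ + (1 - δ ^ ((n : ℝ) / q - 1))⁻¹
  have hm : Antitone m := fun s t hst => measure_mono fun x hx => hst.trans_lt hx
  have hm_meas : Measurable m := hm.measurable
  have hω : ω ≠ ∞ := measure_ball_lt_top.ne
  have hball : ∀ j : ℕ, ν (ball x₀ (δ ^ j * r)) = ENNReal.ofReal ((δ ^ j * r) ^ n) * ω :=
    fun j => by rw [Measure.addHaar_ball_of_pos ν x₀ (by positivity), hdim]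
  have hdiv : ∀ (j : ℕ) (t : ℝ), m t / ν (ball x₀ (δ ^ j * r)) =
      m t / ω / ENNReal.ofReal ((δ ^ j * r) ^ n) := fun j t => by
    rw [hball, ENNReal.div_eq_inv_mul, ENNReal.div_eq_inv_mul, ENNReal.div_eq_inv_mul,
      ENNReal.mul_inv (.inr hω) (.inl ENNReal.ofReal_ne_top), mul_assoc]
  have hterm : ∀ j : ℕ, ENNReal.ofReal (δ ^ j * r) *
      (⨍⁻ x in ball x₀ (δ ^ j * r), ENNReal.ofReal (|f x| ^ q) ∂ν) ^ (1 / q) ≤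
      ENNReal.ofReal q ^ (1 / q) * ∫⁻ t in Ioi 0, ENNReal.ofReal (δ ^ j * r) *
        min (m t / ω / ENNReal.ofReal ((δ ^ j * r) ^ n)) 1 ^ (1 / q) := fun j => by
    rw [lintegral_const_mul' _ _ ENNReal.ofReal_ne_top, mul_left_comm]
    simp_rw [← hdiv j]
    gcongr
    exact setLAverage_rpow_abs_le hf.restrict hq hm fun t _ => le_rfl
  calc _ ≤ ∑' j : ℕ, ENNReal.ofReal q ^ (1 / q) * ∫⁻ t in Ioi 0, ENNReal.ofReal (δ ^ j * r) *
        min (m t / ω / ENNReal.ofReal ((δ ^ j * r) ^ n)) 1 ^ (1 / q) := ENNReal.tsum_le_tsum hterm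
    _ = ENNReal.ofReal q ^ (1 / q) * ∫⁻ t in Ioi 0, ∑' j : ℕ, ENNReal.ofReal (δ ^ j * r) *
        min (m t / ω / ENNReal.ofReal ((δ ^ j * r) ^ n)) 1 ^ (1 / q) := by
        rw [ENNReal.tsum_mul_left, lintegral_tsum fun j => by fun_prop]
    _ ≤ ENNReal.ofReal q ^ (1 / q) *
          ∫⁻ t in Ioi 0, ENNReal.ofReal C * (m t / ω) ^ (1 / (n : ℝ)) := by
        gcongr with t
        exact tsum_ofReal_mul_min_div_rpow_le (by linarith) hqn hδ₀ hδ₁ hr _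
    _ = _ := by
        have hsplit : ∀ t, ENNReal.ofReal C * (m t / ω) ^ (1 / (n : ℝ)) =
            ENNReal.ofReal C * ω⁻¹ ^ (1 / (n : ℝ)) * m t ^ (1 / (n : ℝ)) := fun t => by
          rw [div_eq_mul_inv, ENNReal.mul_rpow_of_nonneg _ _ (by positivity)]
          ring
        simp_rw [hsplit]
        rw [lintegral_const_mul _ (hm_meas.pow_const _)]
        ring

lemma mul_setAverage_rpow_abs_eq_toReal {α : Type*} [MeasurableSpace α] {ν : Measure α}
    {s : Set α} {f : α → ℝ} (hf : AEMeasurable f (ν.restrict s)) (q : ℝ) {ρ : ℝ} (hρ : 0 ≤ ρ) :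
    ρ * (⨍ x in s, |f x| ^ q ∂ν) ^ (1 / q) =
      (ENNReal.ofReal ρ * (⨍⁻ x in s, ENNReal.ofReal (|f x| ^ q) ∂ν) ^ (1 / q)).toReal := by
  rw [ENNReal.toReal_mul, ENNReal.toReal_ofReal hρ, ← ENNReal.toReal_rpow,
    toReal_setLAverage (by fun_prop) (.of_forall fun _ => ENNReal.ofReal_ne_top)]
  simp_rw [ENNReal.toReal_ofReal (by positivity : 0 ≤ |f _| ^ q)]

lemma setLIntegral_rpow_eq_ofReal_setIntegral {s : Set ℝ} (hs : MeasurableSet s) {g : ℝ → ℝ≥0∞}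
    (hg : ∀ t ∈ s, g t ≠ ∞) {p : ℝ} (hp : 0 ≤ p)
    (hint : IntegrableOn (fun t => (g t).toReal ^ p) s) :
    ∫⁻ t in s, g t ^ p = ENNReal.ofReal (∫ t in s, (g t).toReal ^ p) := by
  rw [ofReal_integral_eq_lintegral_ofReal hint (.of_forall fun t => by positivity)]
  refine setLIntegral_congr_fun hs fun t ht => ?_
  rw [← ENNReal.ofReal_rpow_of_nonneg ENNReal.toReal_nonneg hp, ENNReal.ofReal_toReal (hg t ht)]

lemma measure_setOf_lt_abs_ne_top {α : Type*} [MeasurableSpace α] {ν : Measure α} {Ω : Set α}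
    (hΩ : ν Ω ≠ ∞) {f : α → ℝ} (hf : ∀ x, x ∉ Ω → f x = 0) {t : ℝ} (ht : 0 < t) :
    ν {x | t < |f x|} ≠ ∞ := by
  refine ne_top_of_le_ne_top hΩ (measure_mono fun x hx => ?_)
  by_contra hxΩ
  have hx : t < |f x| := hx
  rw [hf x hxΩ, abs_zero] at hx
  exact lt_asymm ht hx

lemma exists_tsum_mul_setAverage_ball_rpow_le {E : Type*} [NormedAddCommGroup E]
    [NormedSpace ℝ E] [FiniteDimensional ℝ E] [MeasurableSpace E] [BorelSpace E] (ν : Measure E)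
    [ν.IsAddHaarMeasure] {n : ℕ} (hdim : finrank ℝ E = n) {q δ : ℝ} (hq : 1 ≤ q) (hqn : q < n)
    (hδ₀ : 0 < δ) (hδ₁ : δ < 1) :
    ∃ c : ℝ, 0 < c ∧ ∀ f : E → ℝ, AEMeasurable f ν → (∀ t > 0, ν {x | t < |f x|} ≠ ∞) →
      IntegrableOn (fun t => (ν {x | t < |f x|}).toReal ^ (1 / (n : ℝ))) (Ioi 0) →
      ∀ (x₀ : E) (r : ℝ), 0 < r →
        ∑' j : ℕ, δ ^ j * r * (⨍ x in ball x₀ (δ ^ j * r), |f x| ^ q ∂ν) ^ (1 / q) ≤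
          c * ∫ t in Ioi 0, (ν {x | t < |f x|}).toReal ^ (1 / (n : ℝ)) := by
  have hE : 0 < (n : ℝ) / q - 1 := by rw [sub_pos, one_lt_div (by linarith)]; exact hqn
  set ω := ν (ball 0 1)
  set K := ENNReal.ofReal q ^ (1 / q) *
    ENNReal.ofReal ((1 - δ)⁻¹ + (1 - δ ^ ((n : ℝ) / q - 1))⁻¹) * ω⁻¹ ^ (1 / (n : ℝ))
  have hω₀ : ω ≠ 0 := (measure_ball_pos _ _ one_pos).ne'
  have hω : ω ≠ ∞ := measure_ball_lt_top.ne
  have hK : K ≠ 0 ∧ K ≠ ∞ := by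
    refine ⟨mul_ne_zero (mul_ne_zero ?_ ?_) ?_, by finiteness⟩
    · exact (ENNReal.rpow_pos (ENNReal.ofReal_pos.2 (by linarith)) ENNReal.ofReal_ne_top).ne'
    · exact (ENNReal.ofReal_pos.2 (inv_one_sub_add_inv_one_sub_rpow_pos hδ₀.le hδ₁ hE)).ne'
    · exact (ENNReal.rpow_pos (ENNReal.inv_pos.2 hω) (ENNReal.inv_ne_top.2 hω₀)).ne'
  refine ⟨K.toReal, ENNReal.toReal_pos hK.1 hK.2, fun f hf hfin hint x₀ r hr => ?_⟩
  have hsum := tsum_mul_setLAverage_ball_rpow_le ν hdim hq hqn hδ₀ hδ₁ hr hf x₀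
  rw [setLIntegral_rpow_eq_ofReal_setIntegral measurableSet_Ioi hfin (by positivity) hint] at hsum
  have hsum_ne_top := ne_top_of_le_ne_top (ENNReal.mul_ne_top hK.2 ENNReal.ofReal_ne_top) hsum
  calc _ = ∑' j : ℕ, (ENNReal.ofReal (δ ^ j * r) *
        (⨍⁻ x in ball x₀ (δ ^ j * r), ENNReal.ofReal (|f x| ^ q) ∂ν) ^ (1 / q)).toReal :=
        tsum_congr fun j => mul_setAverage_rpow_abs_eq_toReal hf.restrict q (by positivity)
    _ = _ := (ENNReal.tsum_toReal_eq (ENNReal.ne_top_of_tsum_ne_top hsum_ne_top)).symm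
    _ ≤ _ := ENNReal.toReal_mono (ENNReal.mul_ne_top hK.2 ENNReal.ofReal_ne_top) hsum
    _ = _ := by
        rw [ENNReal.toReal_mul, ENNReal.toReal_ofReal (integral_nonneg fun t => by positivity)]

theorem lorentz_series_bound_general (n : ℕ) (q δ : ℝ)
    (hq : q ∈ Set.Ioo (1:ℝ) (n:ℝ)) (hδ : δ ∈ Set.Ioo (0:ℝ) (1/4)) :
    ∃ c : ℝ, 0 < c ∧
      ∀ (Ω : Set (EuclideanSpace ℝ (Fin n))) (μ : EuclideanSpace ℝ (Fin n) → ℝ),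
        Bornology.IsBounded Ω →
        LocallyIntegrable μ volume →
        (∀ x, x ∉ Ω → μ x = 0) →
        IntegrableOn
          (fun t : ℝ => (volume {x | t < |μ x|}).toReal ^ (1/(n:ℝ))) (Set.Ioi 0) →
        ∀ x₀ ∈ Ω, ∀ r : ℝ, 0 < r →
          ∑' j : ℕ, δ ^ j * r *
              (⨍ x in Metric.ball x₀ (δ ^ j * r), |μ x| ^ q) ^ (1/q)
            ≤ c * ∫ t in Set.Ioi (0:ℝ), (volume {x | t < |μ x|}).toReal ^ (1/(n:ℝ)) := by
  obtain ⟨c, hc, hbound⟩ := exists_tsum_mul_setAverage_ball_rpow_le volume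
    finrank_euclideanSpace_fin hq.1.le hq.2 hδ.1 (by linarith [hδ.2])
  refine ⟨c, hc, fun Ω μ hΩ hμ hvanish hint x₀ _ r hr => hbound μ
    hμ.aestronglyMeasurable.aemeasurable (fun t ht => ?_) hint x₀ r hr⟩
  exact measure_setOf_lt_abs_ne_top hΩ.measure_lt_top.ne hvanish ht

/-- Lorentz `L(n,1)` control of the Riesz-type series: for `μ ∈ L(n,1)` vanishing outside a
bounded set `Ω`, `δ ∈ (0,1/4)`, `q ∈ (1,n)`, the series
`S_{r,δ,q}(x₀) = ∑_j δ^j r (⨍_{B(x₀, δ^j r)} |μ|^q)^(1/q)` satisfies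
`sup_{x₀ ∈ Ω} S_{r,δ,q}(x₀) ≤ c(n,q,δ) ∫₀^∞ |{|μ| > t}|^(1/n) dt`. -/
theorem lorentz_series_bound (n : ℕ) (hn : 2 ≤ n) (q δ : ℝ)
    (hq : q ∈ Set.Ioo (1:ℝ) (n:ℝ)) (hδ : δ ∈ Set.Ioo (0:ℝ) (1/4)) :
    ∃ c : ℝ, 0 < c ∧
      ∀ (Ω : Set (EuclideanSpace ℝ (Fin n))) (μ : EuclideanSpace ℝ (Fin n) → ℝ),
        Bornology.IsBounded Ω →
        LocallyIntegrable μ volume →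
        (∀ x, x ∉ Ω → μ x = 0) →
        IntegrableOn
          (fun t : ℝ => (volume {x | t < |μ x|}).toReal ^ (1/(n:ℝ))) (Set.Ioi 0) →
        ∀ x₀ ∈ Ω, ∀ r : ℝ, 0 < r →
          ∑' j : ℕ, δ ^ j * r *
              (⨍ x in Metric.ball x₀ (δ ^ j * r), |μ x| ^ q) ^ (1/q)
            ≤ c * ∫ t in Set.Ioi (0:ℝ), (volume {x | t < |μ x|}).toReal ^ (1/(n:ℝ)) :=
  lorentz_series_bound_general n q δ hq hδ
end
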